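/- (Upward stratification theorem) Let ⁺ be the veristratifier, i.e. the stratifier given by X = {ω·1, ω·2, ω·3, …}. For any L_EA-theory T, any L_EA-formula φ, and any assignment s into ℕ, 𝒩_T ⊨ φ[s] if and only if 𝓜_{T^⊕} ⊨ φ⁺[s]. -/

import Mathlib

/-!
Under the veristratifier `⁺`, the formula `φ⁺` uses exactly the operators `K^{ω·1}, …, K^{ω·d}`
with `d` the depth of `φ`, so `(Kφ)⁺ = K^{ω·(d+1)} φ⁺`. Hence `𝒩_T` is the structure `(𝓜_{T^⊕})⁺`
as soon as `T ⊨ φ^s ↔ T^⊕ ∩ ω·(d+1) ⊨ (φ⁺)^s`, and the theorem becomes the general fact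
`M⁺ ⊨ φ[s] ↔ M ⊨ φ⁺[s]`.

For `→`, let `M ⊨ T^⊕ ∩ ω·(d+1)` and let `⁺'` be the stratifier given by the set
`{ω·1, …, ω·d} ∪ {ω·d + j : j ≥ 1}`. It is infinite and lies below `ω·(d+1)`, so `M⁺' ⊨ T`,
hence `M ⊨ (φ^s)⁺' = (φ⁺)^s`, since `⁺'` agrees with `⁺` on formulas of depth at most `d`.
For `←`, if `N ⊨ T` then `N⁻ ⊨ T^⊕` because `(θ^f)⁻ = θ` for every stratifier `f`, so
`N⁻ ⊨ (φ⁺)^s`, that is `N ⊨ φ^s`.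
-/

namespace FCT

/-- Terms of the language `L_PA = (0, S, +, ·)`.  Variables are indexed by `ℕ`. -/
inductive Term : Type where
  | var : ℕ → Term
  | zero : Term
  | succ : Term → Term
  | add : Term → Term → Term
  | mul : Term → Term → Term

/-- Formulas of `L_PA` extended by a family of unary operators indexed by `Op`
(the base logic).  `op K φ` is the formula `Kφ`. -/
inductive Formula (Op : Type) : Type where
  | eq : Term → Term → Formula Op
  | imp : Formula Op → Formula Op → Formula Op
  | not : Formula Op → Formula Op
  | all : ℕ → Formula Op → Formula Op
  | op : Op → Formula Op → Formula Op

/-- The ordinals below `ω·ω`, encoded as pairs: `(a, b)` represents `ω·a + b`,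
with the lexicographic order. -/
abbrev Ord2 : Type := ℕ ×ₗ ℕ

/-- The ordinal `ω·a + b` as an element of `Ord2`. -/
def omul (a b : ℕ) : Ord2 := toLex (a, b)

/-- Formulas of `L_EA`: one operator `K`. -/
abbrev LEA : Type := Formula Unit

/-- Formulas of `L_{ω·ω}`: operators `K^α` for `α < ω·ω`. -/
abbrev LOO : Type := Formula Ord2

/-- `Kφ` in `L_EA`. -/
def KK (φ : LEA) : LEA := .op () φ

/-- Variables occurring in a term. -/
def Term.vars : Term → Set ℕ
  | .var x => {x}
  | .zero => ∅
  | .succ t => t.vars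
  | .add t u => t.vars ∪ u.vars
  | .mul t u => t.vars ∪ u.vars

/-- Free variables of a formula (`FV(Kφ) = FV(φ)`). -/
def Formula.free {Op : Type} : Formula Op → Set ℕ
  | .eq t u => t.vars ∪ u.vars
  | .imp φ ψ => φ.free ∪ ψ.free
  | .not φ => φ.free
  | .all x φ => φ.free \ {x}
  | .op _ φ => φ.free

/-- A sentence is a formula with no free variables. -/
def Formula.IsSentence {Op : Type} (φ : Formula Op) : Prop := φ.free = ∅

/-- A theory is a set of sentences. -/
def IsTheory {Op : Type} (T : Set (Formula Op)) : Prop := ∀ φ ∈ T, φ.IsSentence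

/-- Substitution of the term `u` for the variable `x` in a term. -/
def Term.subst (x : ℕ) (u : Term) : Term → Term
  | .var y => if y = x then u else .var y
  | .zero => .zero
  | .succ t => .succ (Term.subst x u t)
  | .add t₁ t₂ => .add (Term.subst x u t₁) (Term.subst x u t₂)
  | .mul t₁ t₂ => .mul (Term.subst x u t₁) (Term.subst x u t₂)

/-- Substitution `φ(x|u)` of the term `u` for all free occurrences of `x` in `φ`. -/
def Formula.subst {Op : Type} (x : ℕ) (u : Term) : Formula Op → Formula Op
  | .eq t₁ t₂ => .eq (Term.subst x u t₁) (Term.subst x u t₂)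
  | .imp φ ψ => .imp (Formula.subst x u φ) (Formula.subst x u ψ)
  | .not φ => .not (Formula.subst x u φ)
  | .all y φ => if y = x then .all y φ else .all y (Formula.subst x u φ)
  | .op K φ => .op K (Formula.subst x u φ)

/-- The term `u` is substitutable for the variable `x` in the formula. -/
def Formula.Substitutable {Op : Type} (x : ℕ) (u : Term) : Formula Op → Prop
  | .eq _ _ => True
  | .imp φ ψ => φ.Substitutable x u ∧ ψ.Substitutable x u
  | .not φ => φ.Substitutable x u
  | .all y φ => x = y ∨ x ∉ φ.free ∨ (y ∉ u.vars ∧ φ.Substitutable x u)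
  | .op _ φ => φ.Substitutable x u

/-- Matching of two variables relative to a list of pairs of renamed bound variables. -/
def varMatch : List (ℕ × ℕ) → ℕ → ℕ → Prop
  | [], x, y => x = y
  | (a, b) :: ρ, x, y => (x = a ∧ y = b) ∨ (x ≠ a ∧ y ≠ b ∧ varMatch ρ x y)

/-- Alphabetic matching of terms relative to a list of pairs of renamed bound variables. -/
def Term.alpha (ρ : List (ℕ × ℕ)) : Term → Term → Prop
  | .var x, .var y => varMatch ρ x y
  | .zero, .zero => True
  | .succ t, .succ u => t.alpha ρ u
  | .add t₁ t₂, .add u₁ u₂ => t₁.alpha ρ u₁ ∧ t₂.alpha ρ u₂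
  | .mul t₁ t₂, .mul u₁ u₂ => t₁.alpha ρ u₁ ∧ t₂.alpha ρ u₂
  | _, _ => False

/-- Alphabetic matching of formulas relative to a list of pairs of renamed bound variables. -/
def Formula.alpha {Op : Type} (ρ : List (ℕ × ℕ)) : Formula Op → Formula Op → Prop
  | .eq t₁ t₂, .eq u₁ u₂ => t₁.alpha ρ u₁ ∧ t₂.alpha ρ u₂
  | .imp φ₁ φ₂, .imp ψ₁ ψ₂ => φ₁.alpha ρ ψ₁ ∧ φ₂.alpha ρ ψ₂
  | .not φ, .not ψ => φ.alpha ρ ψ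
  | .all x φ, .all y ψ => φ.alpha ((x, y) :: ρ) ψ
  | .op K φ, .op K' ψ => K = K' ∧ φ.alpha ρ ψ
  | _, _ => False

/-- `ψ` is an alphabetic variant of `φ`: it is obtained from `φ` by renaming
bound variables while respecting the binding of the quantifiers. -/
def Formula.AlphaVariant {Op : Type} (φ ψ : Formula Op) : Prop := φ.alpha [] ψ

/-- The data of a structure for the base logic over `L_PA` extended by the
operators `Op`: a first-order part together with a truth valuation
`opSat K φ s` ("`M ⊨ Kφ[s]`") for operator-prefixed formulas. -/
structure PreStruc (Op : Type) : Type 1 where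
  U : Type
  zero : U
  succ : U → U
  add : U → U → U
  mul : U → U → U
  opSat : Op → Formula Op → (ℕ → U) → Prop

/-- Evaluation of terms. -/
def Term.eval {Op : Type} (M : PreStruc Op) (s : ℕ → M.U) : Term → M.U
  | .var x => s x
  | .zero => M.zero
  | .succ t => M.succ (t.eval M s)
  | .add t u => M.add (t.eval M s) (u.eval M s)
  | .mul t u => M.mul (t.eval M s) (u.eval M s)

/-- Satisfaction `M ⊨ φ[s]`: as in first-order logic on non-operator formulas,
and given by `opSat` on operator-prefixed formulas. -/
def Sat {Op : Type} (M : PreStruc Op) : Formula Op → (ℕ → M.U) → Prop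
  | .eq t u, s => t.eval M s = u.eval M s
  | .imp φ ψ, s => Sat M φ s → Sat M ψ s
  | .not φ, s => ¬ Sat M φ s
  | .all x φ, s => ∀ a : M.U, Sat M φ (Function.update s x a)
  | .op K φ, s => M.opSat K φ s

/-- `M` is a genuine structure of the base logic: its operator valuation
(1) depends only on the values of the assignment on the free variables,
(2) is invariant under renaming of bound variables, and
(3) satisfies weak substitution. -/
def IsStruc {Op : Type} (M : PreStruc Op) : Prop :=
  (∀ (K : Op) (φ : Formula Op) (s t : ℕ → M.U),
      (∀ x ∈ φ.free, s x = t x) → (M.opSat K φ s ↔ M.opSat K φ t)) ∧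
  (∀ (K : Op) (φ ψ : Formula Op) (s : ℕ → M.U),
      φ.AlphaVariant ψ → (M.opSat K φ s ↔ M.opSat K ψ s)) ∧
  (∀ (K : Op) (φ : Formula Op) (x y : ℕ) (s : ℕ → M.U),
      φ.Substitutable x (.var y) →
      (M.opSat K (φ.subst x (.var y)) s ↔ M.opSat K φ (Function.update s x (s y))))

/-- A formula is valid if it holds in every structure under every assignment. -/
def Valid {Op : Type} (φ : Formula Op) : Prop :=
  ∀ M : PreStruc Op, IsStruc M → ∀ s : ℕ → M.U, Sat M φ s

/-- `T ⊨ φ`: every structure satisfying all members of `T` (under every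
assignment) satisfies `φ` under every assignment. -/
def Models {Op : Type} (T : Set (Formula Op)) (φ : Formula Op) : Prop :=
  ∀ M : PreStruc Op, IsStruc M → (∀ ψ ∈ T, ∀ s : ℕ → M.U, Sat M ψ s) →
    ∀ s : ℕ → M.U, Sat M φ s

/-- `M ⊨ T`. -/
def SatTheory {Op : Type} (M : PreStruc Op) (T : Set (Formula Op)) : Prop :=
  ∀ φ ∈ T, ∀ s : ℕ → M.U, Sat M φ s

/-- The numeral `n̄`. -/
def numeral : ℕ → Term
  | 0 => .zero
  | n + 1 => .succ (numeral n)

/-- Helper for `φ^s`: replace every free occurrence of a variable `x` not in the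
list `B` of bound variables by the numeral for `s x`. -/
def Term.numSub (s : ℕ → ℕ) (B : List ℕ) : Term → Term
  | .var x => if x ∈ B then .var x else numeral (s x)
  | .zero => .zero
  | .succ t => .succ (t.numSub s B)
  | .add t u => .add (t.numSub s B) (u.numSub s B)
  | .mul t u => .mul (t.numSub s B) (u.numSub s B)

/-- Helper for `φ^s` (carrying the list of bound variables). -/
def Formula.numSub {Op : Type} (s : ℕ → ℕ) : List ℕ → Formula Op → Formula Op
  | B, .eq t u => .eq (t.numSub s B) (u.numSub s B)
  | B, .imp φ ψ => .imp (φ.numSub s B) (ψ.numSub s B)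
  | B, .not φ => .not (φ.numSub s B)
  | B, .all x φ => .all x (φ.numSub s (x :: B))
  | B, .op K φ => .op K (φ.numSub s B)

/-- `φ^s`: the sentence obtained by substituting the numeral for `s x` for each
free occurrence of each variable `x` in `φ`. -/
def assignSub {Op : Type} (s : ℕ → ℕ) (φ : Formula Op) : Formula Op :=
  φ.numSub s []

/-- The intended structure `𝒩_T` of an `L_EA`-theory `T`: standard first-order
part and `𝒩_T ⊨ Kφ[s]` iff `T ⊨ φ^s`. -/
def NStruc (T : Set LEA) : PreStruc Unit where
  U := ℕ
  zero := 0
  succ := Nat.succ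
  add := (· + ·)
  mul := (· * ·)
  opSat := fun _ φ s => Models T (assignSub s φ)

/-- `T` is true: `𝒩_T ⊨ T`. -/
def TheoryTrue (T : Set LEA) : Prop := SatTheory (NStruc T) T

/-- `On(φ)`: the set of `α < ω·ω` such that `K^α` occurs in `φ`. -/
def Formula.On : LOO → Set Ord2
  | .eq _ _ => ∅
  | .imp φ ψ => φ.On ∪ ψ.On
  | .not φ => φ.On
  | .all _ φ => φ.On
  | .op α φ => insert α φ.On

/-- `T ∩ α`: the members of `T` all of whose superscripts are `< α`. -/
def cut (T : Set LOO) (α : Ord2) : Set LOO := {φ | φ ∈ T ∧ ∀ β ∈ φ.On, β < α}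

/-- The intended structure `𝓜_T` of an `L_{ω·ω}`-theory `T`: standard
first-order part and `𝓜_T ⊨ K^αφ[s]` iff `T∩α ⊨ φ^s`. -/
def MStruc (T : Set LOO) : PreStruc Ord2 where
  U := ℕ
  zero := 0
  succ := Nat.succ
  add := (· + ·)
  mul := (· * ·)
  opSat := fun α φ s => Models (cut T α) (assignSub s φ)

/-- The least element of a set `A ⊆ ω·ω` (junk value if `A` is empty):
first minimize the `ω`-coefficient, then the finite part. -/
noncomputable def leastIn (A : Set Ord2) : Ord2 :=
  let a := sInf {a : ℕ | ∃ b : ℕ, toLex (a, b) ∈ A}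
  toLex (a, sInf {b : ℕ | toLex (a, b) ∈ A})

/-- The stratifier given by `X ⊆ ω·ω`: fixes atomic formulas, commutes with
`→`, `¬`, `∀`, and sends `Kφ₀` to `K^α φ₀⁺` where `α` is the least element of
`X \ On(φ₀⁺)`. -/
noncomputable def stratify (X : Set Ord2) : LEA → LOO
  | .eq t u => .eq t u
  | .imp φ ψ => .imp (stratify X φ) (stratify X ψ)
  | .not φ => .not (stratify X φ)
  | .all x φ => .all x (stratify X φ)
  | .op _ φ => .op (leastIn (X \ (stratify X φ).On)) (stratify X φ)

/-- A stratifier is the map given by some infinite `X ⊆ ω·ω`. -/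
def IsStratifier (f : LEA → LOO) : Prop :=
  ∃ X : Set Ord2, X.Infinite ∧ f = stratify X

/-- `T^⊕ = { φ⁺ : φ ∈ T, ⁺ a stratifier }`. -/
def oplus (T : Set LEA) : Set LOO :=
  {ψ | ∃ φ ∈ T, ∃ f : LEA → LOO, IsStratifier f ∧ ψ = f φ}

/-- The veristratifier: the stratifier given by `X = {ω·1, ω·2, ω·3, …}`. -/
noncomputable def veristratifier : LEA → LOO :=
  stratify {α : Ord2 | ∃ n : ℕ, α = omul (n + 1) 0}

/-- `φ⁻`: change every `K^α` into `K`. -/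
def Formula.down : LOO → LEA
  | .eq t u => .eq t u
  | .imp φ ψ => .imp φ.down ψ.down
  | .not φ => .not φ.down
  | .all x φ => .all x φ.down
  | .op _ φ => .op () φ.down

/-- `M⁺` for an `L_{ω·ω}`-structure `M` and a stratifier `⁺`: same universe and
`L_PA`-part, and `M⁺ ⊨ Kφ[s]` iff `M ⊨ (Kφ)⁺[s]`. -/
def upStruc (M : PreStruc Ord2) (f : LEA → LOO) : PreStruc Unit where
  U := M.U
  zero := M.zero
  succ := M.succ
  add := M.add
  mul := M.mul
  opSat := fun _ φ s => Sat M (f (.op () φ)) s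

/-- `M⁻` for an `L_EA`-structure `M`: same universe and `L_PA`-part, and
`M⁻ ⊨ K^αφ[s]` iff `M ⊨ K(φ⁻)[s]`. -/
def downStruc (M : PreStruc Unit) : PreStruc Ord2 where
  U := M.U
  zero := M.zero
  succ := M.succ
  add := M.add
  mul := M.mul
  opSat := fun _ φ s => Sat M (.op () φ.down) s

open Classical in
/-- `h(φ)`: replace every occurrence of `K^α` with `α ∈ X` by `K^{h(α)}`. -/
noncomputable def mapOps (X : Set Ord2) (h : Ord2 → Ord2) : LOO → LOO
  | .eq t u => .eq t u
  | .imp φ ψ => .imp (mapOps X h φ) (mapOps X h ψ)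
  | .not φ => .not (mapOps X h φ)
  | .all x φ => .all x (mapOps X h φ)
  | .op α φ => .op (if α ∈ X then h α else α) (mapOps X h φ)

/-- `h : X → ω·ω` is order preserving. -/
def OrdPresOn (X : Set Ord2) (h : Ord2 → Ord2) : Prop :=
  ∀ a ∈ X, ∀ b ∈ X, a < b → h a < h b

/-- A uniform `L_{ω·ω}`-theory. -/
def Uniform (T : Set LOO) : Prop :=
  ∀ (X : Set Ord2) (h : Ord2 → Ord2), OrdPresOn X h →
    ∀ φ ∈ T, φ.On ⊆ X → mapOps X h φ ∈ T

/-- `h(M)`: same universe and `L_PA`-part as `M`, and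
`h(M) ⊨ K^αφ[s]` iff `M ⊨ h(K^αφ)[s]`. -/
noncomputable def hStruc (X : Set Ord2) (h : Ord2 → Ord2) (M : PreStruc Ord2) :
    PreStruc Ord2 where
  U := M.U
  zero := M.zero
  succ := M.succ
  add := M.add
  mul := M.mul
  opSat := fun α φ s => Sat M (mapOps X h (.op α φ)) s

/-- The depth of nesting of the operators. -/
def Formula.depth {Op : Type} : Formula Op → ℕ
  | .eq _ _ => 0
  | .imp φ ψ => max φ.depth ψ.depth
  | .not φ => φ.depth
  | .all _ φ => φ.depth
  | .op _ φ => φ.depth + 1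

/-- `∀x₁ ⋯ ∀xₙ φ`. -/
def Formula.alls {Op : Type} : List ℕ → Formula Op → Formula Op
  | [], φ => φ
  | x :: l, φ => .all x (Formula.alls l φ)

/-- `ψ` is a universal closure of `φ`: a sentence of the form `∀x₁ ⋯ ∀xₙ φ`. -/
def IsUClosure {Op : Type} (φ ψ : Formula Op) : Prop :=
  ψ.IsSentence ∧ ∃ l : List ℕ, ψ = Formula.alls l φ

/-- The schema `E₁`: universal closures of `Kφ`, `φ` valid. -/
def E1 : Set LEA := {χ | ∃ φ : LEA, Valid φ ∧ IsUClosure (KK φ) χ}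

/-- The schema `E₂`: universal closures of `K(φ→ψ) → Kφ → Kψ`. -/
def E2 : Set LEA :=
  {χ | ∃ φ ψ : LEA, IsUClosure (.imp (KK (.imp φ ψ)) (.imp (KK φ) (KK ψ))) χ}

/-- The schema `E′₂`: universal closures of `K(φ→ψ) → Kφ → Kψ` with
`depth(φ) ≤ depth(ψ)`. -/
def E2' : Set LEA :=
  {χ | ∃ φ ψ : LEA, φ.depth ≤ ψ.depth ∧
    IsUClosure (.imp (KK (.imp φ ψ)) (.imp (KK φ) (KK ψ))) χ}

/-- The schema `E₃`: universal closures of `Kφ → φ`. -/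
def E3 : Set LEA := {χ | ∃ φ : LEA, IsUClosure (.imp (KK φ) φ) χ}

/-- The Assigned Validity schema: all `φ^s` with `φ` valid, `s : ℕ → ℕ`. -/
def AssignedValidity : Set LEA :=
  {χ | ∃ (φ : LEA) (s : ℕ → ℕ), Valid φ ∧ χ = assignSub s φ}

/-- `K(T₀) = { Kφ : φ ∈ T₀ }`. -/
def KSet (T : Set LEA) : Set LEA := {χ | ∃ φ ∈ T, χ = KK φ}

/-- Membership in the smallest `K`-closed set containing `S`. -/
inductive KClosureMem (S : Set LEA) : LEA → Prop
  | base {φ : LEA} : φ ∈ S → KClosureMem S φ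
  | k {φ : LEA} : KClosureMem S φ → KClosureMem S (KK φ)

/-- The smallest `K`-closed theory containing `S`. -/
def KClosure (S : Set LEA) : Set LEA := {φ | KClosureMem S φ}

/-- `T₀` is upgeneric: `𝓜_{T^⊕} ⊨ T₀^⊕` for every `L_EA`-theory `T ⊇ T₀`. -/
def Upgeneric (T₀ : Set LEA) : Prop :=
  ∀ T : Set LEA, IsTheory T → T₀ ⊆ T → SatTheory (MStruc (oplus T)) (oplus T₀)

/-- A concrete Gödel numbering of terms. -/
def encodeTerm : Term → ℕ
  | .var x => Nat.pair 0 x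
  | .zero => Nat.pair 1 0
  | .succ t => Nat.pair 2 (encodeTerm t)
  | .add t u => Nat.pair 3 (Nat.pair (encodeTerm t) (encodeTerm u))
  | .mul t u => Nat.pair 4 (Nat.pair (encodeTerm t) (encodeTerm u))

/-- A concrete Gödel numbering of `L_EA`-formulas. -/
def encodeLEA : LEA → ℕ
  | .eq t u => Nat.pair 0 (Nat.pair (encodeTerm t) (encodeTerm u))
  | .imp φ ψ => Nat.pair 1 (Nat.pair (encodeLEA φ) (encodeLEA ψ))
  | .not φ => Nat.pair 2 (encodeLEA φ)
  | .all x φ => Nat.pair 3 (Nat.pair x (encodeLEA φ))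
  | .op _ φ => Nat.pair 4 (encodeLEA φ)

/-- `T` is recursively enumerable: the set of Gödel numbers of its members is r.e. -/
def RETheory (T : Set LEA) : Prop := REPred fun n => ∃ φ ∈ T, encodeLEA φ = n

/-- `T₀` is r.e.-upgeneric: `T₀` is r.e. and `𝓜_{T^⊕} ⊨ T₀^⊕` for every r.e.
`L_EA`-theory `T ⊇ T₀`. -/
def REUpgeneric (T₀ : Set LEA) : Prop :=
  RETheory T₀ ∧
    ∀ T : Set LEA, IsTheory T → RETheory T → T₀ ⊆ T →
      SatTheory (MStruc (oplus T)) (oplus T₀)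

theorem leastIn_eq_of_isLeast {A : Set Ord2} {α : Ord2} (h : IsLeast A α) : leastIn A = α := by
  obtain ⟨⟨p, q⟩, rfl⟩ := toLex.surjective α
  have hp : sInf {a : ℕ | ∃ b : ℕ, toLex (a, b) ∈ A} = p := by
    refine IsLeast.csInf_eq ⟨⟨q, h.1⟩, fun a ⟨b, hb⟩ => ?_⟩
    have := h.2 hb
    rw [Prod.Lex.toLex_le_toLex] at this
    omega
  have hq : sInf {b : ℕ | toLex (p, b) ∈ A} = q := by
    refine IsLeast.csInf_eq ⟨h.1, fun b hb => ?_⟩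
    have := h.2 hb
    rw [Prod.Lex.toLex_le_toLex] at this
    omega
  simp only [leastIn, hp, hq]

theorem leastIn_mem {A : Set Ord2} (h : A.Nonempty) : leastIn A ∈ A := by
  rw [leastIn_eq_of_isLeast ⟨wellFounded_lt.min_mem A h, fun _ hb => wellFounded_lt.min_le hb⟩]
  exact wellFounded_lt.min_mem A h

namespace Formula

theorem free_down (χ : LOO) : χ.down.free = χ.free := by
  induction χ <;> simp [down, free, *]

theorem substitutable_down_iff (x : ℕ) (u : Term) (χ : LOO) :
    χ.down.Substitutable x u ↔ χ.Substitutable x u := by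
  induction χ <;> simp [down, Substitutable, free_down, *]

theorem down_subst (x : ℕ) (u : Term) (χ : LOO) : (χ.subst x u).down = χ.down.subst x u := by
  induction χ with
  | all y φ ih => by_cases h : y = x <;> simp [subst, down, h, ih]
  | _ => simp [subst, down, *]

theorem down_numSub (s : ℕ → ℕ) (χ : LOO) (B : List ℕ) :
    (χ.numSub s B).down = χ.down.numSub s B := by
  induction χ generalizing B <;> simp [numSub, down, *]

theorem alpha_down {φ ψ : LOO} {ρ : List (ℕ × ℕ)} (h : φ.alpha ρ ψ) : φ.down.alpha ρ ψ.down := by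
  induction φ generalizing ψ ρ <;> cases ψ <;> simp_all [alpha, down]

theorem on_finite (χ : LOO) : χ.On.Finite := by
  induction χ with
  | eq => exact Set.finite_empty
  | imp _ _ ih₁ ih₂ => exact ih₁.union ih₂
  | not _ ih => exact ih
  | all _ _ ih => exact ih
  | op α _ ih => exact ih.insert α

theorem on_subst (x : ℕ) (u : Term) (χ : LOO) : (χ.subst x u).On = χ.On := by
  induction χ with
  | all y φ ih => by_cases h : y = x <;> simp [subst, On, h, ih]
  | _ => simp [subst, On, *]

theorem on_numSub (s : ℕ → ℕ) (χ : LOO) (B : List ℕ) : (χ.numSub s B).On = χ.On := by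
  induction χ generalizing B <;> simp [numSub, On, *]

end Formula

section Stratify

variable (X : Set Ord2)

theorem down_stratify (φ : LEA) : (stratify X φ).down = φ := by
  induction φ <;> simp [stratify, Formula.down, *]

theorem free_stratify (φ : LEA) : (stratify X φ).free = φ.free := by
  rw [← Formula.free_down, down_stratify]

theorem substitutable_stratify_iff (x : ℕ) (u : Term) (φ : LEA) :
    (stratify X φ).Substitutable x u ↔ φ.Substitutable x u := by
  rw [← Formula.substitutable_down_iff, down_stratify]

theorem on_stratify_subset (hX : X.Infinite) (φ : LEA) : (stratify X φ).On ⊆ X := by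
  induction φ with
  | eq => simp [stratify, Formula.On]
  | imp _ _ ih₁ ih₂ => exact Set.union_subset ih₁ ih₂
  | not _ ih => exact ih
  | all _ _ ih => exact ih
  | op _ φ ih =>
    exact Set.insert_subset (leastIn_mem (hX.sdiff (Formula.on_finite _)).nonempty).1 ih

theorem stratify_subst (x : ℕ) (u : Term) (φ : LEA) :
    stratify X (φ.subst x u) = (stratify X φ).subst x u := by
  induction φ with
  | all y φ ih => by_cases h : y = x <;> simp [Formula.subst, stratify, h, ih]
  | _ => simp [Formula.subst, stratify, Formula.on_subst, *]

theorem stratify_numSub (s : ℕ → ℕ) (φ : LEA) (B : List ℕ) :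
    stratify X (φ.numSub s B) = (stratify X φ).numSub s B := by
  induction φ generalizing B <;> simp [Formula.numSub, stratify, Formula.on_numSub, *]

theorem alpha_stratify_and_on_eq {φ ψ : LEA} {ρ : List (ℕ × ℕ)} (h : φ.alpha ρ ψ) :
    (stratify X φ).alpha ρ (stratify X ψ) ∧ (stratify X φ).On = (stratify X ψ).On := by
  induction φ generalizing ψ ρ with
  | eq => cases ψ <;> simp_all [Formula.alpha, stratify, Formula.On]
  | imp _ _ ih₁ ih₂ =>
    cases ψ <;> simp only [Formula.alpha] at h
    obtain ⟨h₁, o₁⟩ := ih₁ h.1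
    obtain ⟨h₂, o₂⟩ := ih₂ h.2
    exact ⟨⟨h₁, h₂⟩, by simp only [stratify, Formula.On, o₁, o₂]⟩
  | not _ ih => cases ψ <;> simp only [Formula.alpha] at h; exact ih h
  | all _ _ ih => cases ψ <;> simp only [Formula.alpha] at h; exact ih h
  | op _ _ ih =>
    cases ψ <;> simp only [Formula.alpha] at h
    obtain ⟨h', o⟩ := ih h.2
    exact ⟨⟨by simp only [o], h'⟩, by simp only [stratify, Formula.On, o]⟩

end Stratify

theorem eval_downStruc (N : PreStruc Unit) (s : ℕ → N.U) (t : Term) :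
    t.eval (downStruc N) s = t.eval N s := by
  induction t <;> simp only [Term.eval, *] <;> rfl

theorem eval_upStruc (M : PreStruc Ord2) (f : LEA → LOO) (s : ℕ → M.U) (t : Term) :
    t.eval (upStruc M f) s = t.eval M s := by
  induction t <;> simp only [Term.eval, *] <;> rfl

theorem sat_downStruc (N : PreStruc Unit) (χ : LOO) (s : ℕ → N.U) :
    Sat (downStruc N) χ s ↔ Sat N χ.down s := by
  induction χ generalizing s with
  | eq t u => simp only [Sat, Formula.down, eval_downStruc]; exact Iff.rfl
  | imp _ _ ih₁ ih₂ => exact imp_congr (ih₁ s) (ih₂ s)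
  | not _ ih => exact not_congr (ih s)
  | all x _ ih => exact forall_congr' fun a => ih (Function.update s x a)
  | op => exact Iff.rfl

theorem sat_upStruc (M : PreStruc Ord2) (X : Set Ord2) (φ : LEA) (s : ℕ → M.U) :
    Sat (upStruc M (stratify X)) φ s ↔ Sat M (stratify X φ) s := by
  induction φ generalizing s with
  | eq t u => simp only [Sat, stratify, eval_upStruc]; exact Iff.rfl
  | imp _ _ ih₁ ih₂ => exact imp_congr (ih₁ s) (ih₂ s)
  | not _ ih => exact not_congr (ih s)
  | all x _ ih => exact forall_congr' fun a => ih (Function.update s x a)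
  | op => exact Iff.rfl

theorem isStruc_downStruc {N : PreStruc Unit} (hN : IsStruc N) : IsStruc (downStruc N) := by
  obtain ⟨hfree, halpha, hsubst⟩ := hN
  refine ⟨fun _ χ s t hst => ?_, fun _ χ ψ s h => ?_, fun _ χ x y s h => ?_⟩
  · exact hfree () χ.down s t fun z hz => hst z (χ.free_down ▸ hz)
  · exact halpha () χ.down ψ.down s (Formula.alpha_down h)
  · show N.opSat () (χ.subst x (.var y)).down s ↔ N.opSat () χ.down (Function.update s x (s y))
    rw [Formula.down_subst]
    exact hsubst () χ.down x y s ((χ.substitutable_down_iff x _).2 h)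

theorem isStruc_upStruc (X : Set Ord2) {M : PreStruc Ord2} (hM : IsStruc M) :
    IsStruc (upStruc M (stratify X)) := by
  obtain ⟨hfree, halpha, hsubst⟩ := hM
  refine ⟨fun _ φ s t hst => ?_, fun _ φ ψ s h => ?_, fun _ φ x y s h => ?_⟩
  · exact hfree _ _ s t fun z hz => hst z (free_stratify X φ ▸ hz)
  · obtain ⟨hα, hOn⟩ := alpha_stratify_and_on_eq X h
    show M.opSat (leastIn (X \ (stratify X φ).On)) (stratify X φ) s ↔
      M.opSat (leastIn (X \ (stratify X ψ).On)) (stratify X ψ) s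
    rw [hOn]
    exact halpha _ _ _ s hα
  · show M.opSat (leastIn (X \ (stratify X (φ.subst x (.var y))).On))
        (stratify X (φ.subst x (.var y))) s ↔
      M.opSat (leastIn (X \ (stratify X φ).On)) (stratify X φ) (Function.update s x (s y))
    rw [stratify_subst, Formula.on_subst]
    exact hsubst _ _ x y s ((substitutable_stratify_iff X x _ φ).2 h)

theorem models_down_of_subset_oplus {T : Set LEA} {S : Set LOO} (hS : S ⊆ oplus T) {χ : LOO}
    (h : Models S χ) : Models T χ.down := by
  intro N hN hNT s
  rw [← sat_downStruc]
  refine h (downStruc N) (isStruc_downStruc hN) (fun ψ hψ u => ?_) s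
  obtain ⟨θ, hθ, f, ⟨Y, -, rfl⟩, rfl⟩ := hS hψ
  exact (sat_downStruc N _ u).2 ((down_stratify Y θ).symm ▸ hNT θ hθ u)

theorem models_cut_oplus_stratify {T : Set LEA} {X : Set Ord2} {α : Ord2} (hX : X.Infinite)
    (hXα : ∀ β ∈ X, β < α) {ψ : LEA} (h : Models T ψ) :
    Models (cut (oplus T) α) (stratify X ψ) := by
  intro M hM hMT s
  rw [← sat_upStruc]
  refine h _ (isStruc_upStruc X hM) (fun θ hθ u => ?_) s
  refine (sat_upStruc M X θ u).2 (hMT _ ?_ u)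
  exact ⟨⟨θ, hθ, _, ⟨X, hX, rfl⟩, rfl⟩, fun β hβ => hXα β (on_stratify_subset X hX θ hβ)⟩

def veriSet : Set Ord2 := {α : Ord2 | ∃ n : ℕ, α = omul (n + 1) 0}

def omegaMultiples (d : ℕ) : Set Ord2 :=
  {β | 1 ≤ (ofLex β).1 ∧ (ofLex β).1 ≤ d ∧ (ofLex β).2 = 0}

def cutoffSet (d : ℕ) : Set Ord2 := omegaMultiples d ∪ {β | (ofLex β).1 = d ∧ 1 ≤ (ofLex β).2}

theorem mem_veriSet {β : Ord2} : β ∈ veriSet ↔ 1 ≤ (ofLex β).1 ∧ (ofLex β).2 = 0 := by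
  obtain ⟨⟨a, b⟩, rfl⟩ := toLex.surjective β
  simp only [veriSet, omul, Set.mem_ofPred_eq, EmbeddingLike.apply_eq_iff_eq, Prod.mk.injEq,
    ofLex_toLex]
  constructor
  · rintro ⟨n, rfl, rfl⟩
    omega
  · rintro ⟨ha, rfl⟩
    exact ⟨a - 1, by omega, rfl⟩

theorem omegaMultiples_zero : omegaMultiples 0 = ∅ := by
  ext β
  simp only [omegaMultiples, Set.mem_ofPred_eq, Set.mem_empty_iff_false, iff_false]
  omega

theorem omegaMultiples_union (d₁ d₂ : ℕ) :
    omegaMultiples d₁ ∪ omegaMultiples d₂ = omegaMultiples (max d₁ d₂) := by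
  ext β
  simp only [omegaMultiples, Set.mem_union, Set.mem_ofPred_eq]
  omega

theorem insert_omegaMultiples (e : ℕ) :
    insert (omul (e + 1) 0) (omegaMultiples e) = omegaMultiples (e + 1) := by
  ext β
  obtain ⟨⟨a, b⟩, rfl⟩ := toLex.surjective β
  simp only [omegaMultiples, omul, Set.mem_insert_iff, Set.mem_ofPred_eq, ofLex_toLex,
    EmbeddingLike.apply_eq_iff_eq, Prod.mk.injEq]
  omega

theorem isLeast_veriSet_sdiff (e : ℕ) :
    IsLeast (veriSet \ omegaMultiples e) (omul (e + 1) 0) := by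
  refine ⟨?_, fun β hβ => ?_⟩
  · simp only [Set.mem_sdiff, mem_veriSet, omegaMultiples, Set.mem_ofPred_eq, omul, ofLex_toLex,
      and_true]
    omega
  · simp only [Set.mem_sdiff, mem_veriSet, omegaMultiples, Set.mem_ofPred_eq] at hβ
    simp only [Prod.Lex.le_iff, omul, ofLex_toLex]
    omega

theorem isLeast_cutoffSet_sdiff {d e : ℕ} (he : e < d) :
    IsLeast (cutoffSet d \ omegaMultiples e) (omul (e + 1) 0) := by
  refine ⟨?_, fun β hβ => ?_⟩
  · simp only [Set.mem_sdiff, cutoffSet, omegaMultiples, Set.mem_union, Set.mem_ofPred_eq, omul,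
      ofLex_toLex, and_true]
    omega
  · simp only [Set.mem_sdiff, cutoffSet, omegaMultiples, Set.mem_union, Set.mem_ofPred_eq] at hβ
    simp only [Prod.Lex.le_iff, omul, ofLex_toLex]
    omega

theorem cutoffSet_infinite (d : ℕ) : (cutoffSet d).Infinite :=
  Set.infinite_of_injective_forall_mem (f := fun j : ℕ => toLex (d, j + 1))
    (fun _ _ h => by simpa using h) (fun _ => Or.inr ⟨rfl, by simp⟩)

theorem lt_of_mem_cutoffSet {d : ℕ} {β : Ord2} (hβ : β ∈ cutoffSet d) : β < omul (d + 1) 0 := by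
  simp only [cutoffSet, omegaMultiples, Set.mem_union, Set.mem_ofPred_eq] at hβ
  simp only [Prod.Lex.lt_iff, omul, ofLex_toLex]
  omega

theorem on_stratify_veriSet (φ : LEA) : (stratify veriSet φ).On = omegaMultiples φ.depth := by
  induction φ with
  | eq => simp [stratify, Formula.On, Formula.depth, omegaMultiples_zero]
  | imp _ _ ih₁ ih₂ => simp [stratify, Formula.On, Formula.depth, ih₁, ih₂, omegaMultiples_union]
  | not _ ih => exact ih
  | all _ _ ih => exact ih
  | op _ φ ih =>
    simp only [stratify, Formula.On, Formula.depth, ih,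
      leastIn_eq_of_isLeast (isLeast_veriSet_sdiff _), insert_omegaMultiples]

theorem stratify_cutoffSet {d : ℕ} {φ : LEA} (hφ : φ.depth ≤ d) :
    stratify (cutoffSet d) φ = stratify veriSet φ := by
  induction φ with
  | eq => rfl
  | imp _ _ ih₁ ih₂ =>
    simp only [Formula.depth, max_le_iff] at hφ
    simp only [stratify, ih₁ hφ.1, ih₂ hφ.2]
  | not _ ih => simp only [stratify, ih hφ]
  | all _ _ ih => simp only [stratify, ih hφ]
  | op _ φ ih =>
    simp only [Formula.depth] at hφ
    simp only [stratify, ih (by omega), on_stratify_veriSet,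
      leastIn_eq_of_isLeast (isLeast_veriSet_sdiff _),
      leastIn_eq_of_isLeast (isLeast_cutoffSet_sdiff (by omega : φ.depth < d))]

theorem veristratifier_op (φ : LEA) :
    veristratifier (.op () φ) = .op (omul (φ.depth + 1) 0) (veristratifier φ) := by
  show Formula.op (leastIn (veriSet \ (stratify veriSet φ).On)) _ = _
  rw [on_stratify_veriSet, leastIn_eq_of_isLeast (isLeast_veriSet_sdiff _)]
  rfl

theorem models_iff_models_cut_veristratifier (T : Set LEA) (φ : LEA) (s : ℕ → ℕ) :
    Models T (assignSub s φ) ↔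
      Models (cut (oplus T) (omul (φ.depth + 1) 0)) (assignSub s (veristratifier φ)) := by
  constructor
  · intro h
    have := models_cut_oplus_stratify (cutoffSet_infinite φ.depth)
      (fun _ => lt_of_mem_cutoffSet) h
    rwa [assignSub, stratify_numSub, stratify_cutoffSet le_rfl] at this
  · intro h
    have := models_down_of_subset_oplus (fun _ hψ => hψ.1) h
    rwa [assignSub, Formula.down_numSub, veristratifier, down_stratify] at this

theorem sat_nStruc (T : Set LEA) :
    Sat (NStruc T) = Sat (upStruc (MStruc (oplus T)) veristratifier) := by
  have hopSat : (NStruc T).opSat = (upStruc (MStruc (oplus T)) veristratifier).opSat := by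
    funext _ φ s
    change _ = Sat (MStruc (oplus T)) (veristratifier (.op () φ)) s
    rw [veristratifier_op]
    exact propext (models_iff_models_cut_veristratifier T φ s)
  -- The two structures share their first-order part; equating them instead would require
  -- transporting assignments along the equality of carriers.
  exact congrArg (β := LEA → (ℕ → ℕ) → Prop)
    (fun o => Sat ⟨ℕ, 0, Nat.succ, (· + ·), (· * ·), o⟩) hopSat

theorem upward_stratification_general (T : Set LEA) (φ : LEA) (s : ℕ → ℕ) :
    Sat (NStruc T) φ s ↔ Sat (MStruc (oplus T)) (veristratifier φ) s := by
  rw [sat_nStruc]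
  exact sat_upStruc (MStruc (oplus T)) veriSet φ s

/-- The upward stratification theorem: for the veristratifier `⁺`,
`𝒩_T ⊨ φ[s]` iff `𝓜_{T^⊕} ⊨ φ⁺[s]`. -/
theorem upward_stratification (T : Set LEA) (hT : IsTheory T)
    (φ : LEA) (s : ℕ → ℕ) :
    Sat (NStruc T) φ s ↔ Sat (MStruc (oplus T)) (veristratifier φ) s :=
  upward_stratification_general T φ s

end FCT
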